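/- arXiv:2501.08932 — 5 statements merged into one kernel-verified Lean document; each statement's English description precedes it below -/
import Mathlib

section
/- Let X, Y be real Hilbert spaces, A : X → Y bounded linear, r ∈ Y with r ≠ 0, 0 < q < 1, and suppose α > 0 satisfies α ‖(A A* + αI)⁻¹ r‖ = q ‖r‖ (Morozov's discrepancy principle). Then α ≤ q/(1−q) · ‖A‖². -/
open scoped RealInnerProductSpace
open ContinuousLinearMap

/-- if `α > 0` satisfies Morozov's discrepancy principle
`α ‖(A A* + αI)⁻¹ r‖ = q ‖r‖` for `r ≠ 0` and `0 < q < 1`, then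
`α ≤ q/(1−q) ‖A‖²`. -/
theorem stmt_2 {X Y : Type*}
    [NormedAddCommGroup X] [InnerProductSpace ℝ X] [CompleteSpace X]
    [NormedAddCommGroup Y] [InnerProductSpace ℝ Y] [CompleteSpace Y]
    (A : X →L[ℝ] Y) (r : Y) (hr : r ≠ 0) (q : ℝ) (hq0 : 0 < q) (hq1 : q < 1)
    (α : ℝ) (hα : 0 < α)
    (B₁ : Y →L[ℝ] Y)
    (hB₁l : B₁ ∘L (A ∘L (ContinuousLinearMap.adjoint A) + α • ContinuousLinearMap.id ℝ Y)
      = ContinuousLinearMap.id ℝ Y)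
    (hB₁r : (A ∘L (ContinuousLinearMap.adjoint A) + α • ContinuousLinearMap.id ℝ Y) ∘L B₁
      = ContinuousLinearMap.id ℝ Y)
    (hMDP : α * ‖B₁ r‖ = q * ‖r‖) :
    α ≤ q / (1 - q) * ‖A‖ ^ 2 := by
  set u := B₁ r with hu
  have hru : A ((ContinuousLinearMap.adjoint A) u) + α • u = r := by
    have := congrArg (fun T => T r) hB₁r
    simpa using this
  have hrnorm : ‖r‖ ≤ (‖A‖ ^ 2 + α) * ‖u‖ := by
    calc ‖r‖ = ‖A ((ContinuousLinearMap.adjoint A) u) + α • u‖ := by rw [hru]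
    _ ≤ ‖A ((ContinuousLinearMap.adjoint A) u)‖ + ‖α • u‖ := norm_add_le _ _
    _ ≤ ‖A‖ * (‖A‖ * ‖u‖) + α * ‖u‖ := by
        gcongr
        · calc ‖A ((ContinuousLinearMap.adjoint A) u)‖
              ≤ ‖A‖ * ‖(ContinuousLinearMap.adjoint A) u‖ := A.le_opNorm _
          _ ≤ ‖A‖ * (‖ContinuousLinearMap.adjoint A‖ * ‖u‖) := by
              gcongr; exact (ContinuousLinearMap.adjoint A).le_opNorm _
          _ = ‖A‖ * (‖A‖ * ‖u‖) := by rw [LinearIsometryEquiv.norm_map ContinuousLinearMap.adjoint A]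
        · rw [norm_smul, Real.norm_of_nonneg hα.le]
    _ = (‖A‖ ^ 2 + α) * ‖u‖ := by ring
  have hrpos : 0 < ‖r‖ := norm_pos_iff.mpr hr
  have hunorm : ‖u‖ = q * ‖r‖ / α := by field_simp [hα.ne'] at hMDP ⊢; linarith
  rw [hunorm] at hrnorm
  have key : α * (1 - q) ≤ q * ‖A‖ ^ 2 := by
    rw [mul_div_assoc'] at hrnorm
    have := (le_div_iff₀ hα).mp hrnorm
    nlinarith [hrpos]
  rw [div_mul_eq_mul_div, le_div_iff₀ (by linarith : (0:ℝ) < 1 - q)]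
  linarith
end

section
/- Let X, Y be Hilbert spaces, B ⊆ X, F : B → Y. Assume: (i) for all x, x̃ ∈ B, ‖F(x) − F(x̃) − F'(x̃)(x − x̃)‖ ≤ (L/2)‖x − x̃‖², and (ii) the Hölder stability estimate (1/√2)‖x − x̃‖ ≤ C_F ‖F(x) − F(x̃)‖^((1+ε)/2) for all x, x̃ ∈ B, with L, C_F > 0 and ε ∈ (0,1]. If moreover diam(B) is bounded so that ‖x − x̃‖ ≤ 2√(2ρ') on B, then the tangential cone condition holds: ‖F(x) − F(x̃) − F'(x̃)(x − x̃)‖ ≤ η ‖F(x) − F(x̃)‖ with η = (L/2)(2√(2ρ'))^(2ε/(1+ε)) (√2 C_F)^(2/(1+ε)). -/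
/-- the Taylor remainder bound and Hölder stability, together with a bound
`‖x − x̃‖ ≤ 2√(2ρ')` on `B`, imply the tangential cone condition with constant
`η = (L/2)(2√(2ρ'))^(2ε/(1+ε)) (√2 C_F)^(2/(1+ε))`. -/
theorem stmt_5 {X Y : Type*}
    [NormedAddCommGroup X] [InnerProductSpace ℝ X] [CompleteSpace X]
    [NormedAddCommGroup Y] [InnerProductSpace ℝ Y] [CompleteSpace Y]
    (B : Set X) (F : X → Y) (F' : X → X →L[ℝ] Y)
    (L C_F ρ' ε : ℝ) (hL : 0 < L) (hC : 0 < C_F) (hρ' : 0 < ρ')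
    (hε : ε ∈ Set.Ioc (0 : ℝ) 1)
    (htaylor : ∀ x ∈ B, ∀ x' ∈ B,
      ‖F x - F x' - F' x' (x - x')‖ ≤ L / 2 * ‖x - x'‖ ^ 2)
    (hholder : ∀ x ∈ B, ∀ x' ∈ B,
      1 / Real.sqrt 2 * ‖x - x'‖ ≤ C_F * ‖F x - F x'‖ ^ ((1 + ε) / 2))
    (hdiam : ∀ x ∈ B, ∀ x' ∈ B, ‖x - x'‖ ≤ 2 * Real.sqrt (2 * ρ')) :
    ∀ x ∈ B, ∀ x' ∈ B,
      ‖F x - F x' - F' x' (x - x')‖ ≤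
        L / 2 * (2 * Real.sqrt (2 * ρ')) ^ (2 * ε / (1 + ε))
          * (Real.sqrt 2 * C_F) ^ (2 / (1 + ε)) * ‖F x - F x'‖ := by
  intro x hx x' hx'
  have hε0 := hε.1
  set d := ‖x - x'‖ with hd
  set f := ‖F x - F x'‖ with hf
  have hd0 : (0:ℝ) ≤ d := norm_nonneg _
  have hf0 : (0:ℝ) ≤ f := norm_nonneg _
  have h1ε : (0:ℝ) < 1 + ε := by linarith
  have hs2 : (0:ℝ) < Real.sqrt 2 := by positivity
  have hR : (0:ℝ) < 2 * Real.sqrt (2 * ρ') := by positivity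
  have hK : (0:ℝ) < Real.sqrt 2 * C_F := by positivity
  have hα0 : (0:ℝ) ≤ 2 * ε / (1 + ε) := by positivity
  have hβ0 : (0:ℝ) ≤ 2 / (1 + ε) := by positivity
  have hdK : d ≤ (Real.sqrt 2 * C_F) * f ^ ((1 + ε) / 2) := by
    have h := hholder x hx x' hx'
    calc d = Real.sqrt 2 * (1 / Real.sqrt 2 * d) := by field_simp
      _ ≤ Real.sqrt 2 * (C_F * f ^ ((1 + ε) / 2)) :=
          mul_le_mul_of_nonneg_left h hs2.le
      _ = (Real.sqrt 2 * C_F) * f ^ ((1 + ε) / 2) := by ring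
  have hsum : 2 * ε / (1 + ε) + 2 / (1 + ε) = 2 := by field_simp; ring
  have hsplit : d ^ (2:ℕ) = d ^ (2 * ε / (1 + ε)) * d ^ (2 / (1 + ε)) := by
    rw [← Real.rpow_add' hd0 (by rw [hsum]; norm_num), hsum]
    rw [← Real.rpow_natCast d 2]
    norm_num
  have h1 : d ^ (2 * ε / (1 + ε)) ≤ (2 * Real.sqrt (2 * ρ')) ^ (2 * ε / (1 + ε)) :=
    Real.rpow_le_rpow hd0 (hdiam x hx x' hx') hα0
  have h2 : d ^ (2 / (1 + ε)) ≤ (Real.sqrt 2 * C_F) ^ (2 / (1 + ε)) * f := by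
    calc d ^ (2 / (1 + ε))
        ≤ ((Real.sqrt 2 * C_F) * f ^ ((1 + ε) / 2)) ^ (2 / (1 + ε)) :=
          Real.rpow_le_rpow hd0 hdK hβ0
      _ = (Real.sqrt 2 * C_F) ^ (2 / (1 + ε)) * (f ^ ((1 + ε) / 2)) ^ (2 / (1 + ε)) :=
          Real.mul_rpow hK.le (by positivity)
      _ = (Real.sqrt 2 * C_F) ^ (2 / (1 + ε)) * f ^ ((1 + ε) / 2 * (2 / (1 + ε))) := by
          rw [← Real.rpow_mul hf0]
      _ = (Real.sqrt 2 * C_F) ^ (2 / (1 + ε)) * f := by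
          congr 1
          rw [show (1 + ε) / 2 * (2 / (1 + ε)) = 1 by field_simp]
          exact Real.rpow_one f
  calc ‖F x - F x' - F' x' (x - x')‖ ≤ L / 2 * d ^ 2 := htaylor x hx x' hx'
    _ = L / 2 * (d ^ (2 * ε / (1 + ε)) * d ^ (2 / (1 + ε))) := by rw [hsplit]
    _ ≤ L / 2 * ((2 * Real.sqrt (2 * ρ')) ^ (2 * ε / (1 + ε))
          * ((Real.sqrt 2 * C_F) ^ (2 / (1 + ε)) * f)) := by
        apply mul_le_mul_of_nonneg_left _ (by linarith : (0:ℝ) ≤ L / 2)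
        exact mul_le_mul h1 h2 (Real.rpow_nonneg hd0 _) (Real.rpow_nonneg hR.le _)
    _ = L / 2 * (2 * Real.sqrt (2 * ρ')) ^ (2 * ε / (1 + ε))
          * (Real.sqrt 2 * C_F) ^ (2 / (1 + ε)) * f := by ring
end

section
/- Let ε ∈ (0,1), c > 0, ρ > 0, and let (γ_k) be nonnegative reals with γ_0 ≤ ρ and γ_{k+1} ≤ γ_k − c γ_k^{2/(1+ε)} for all k (additionally assume c γ_k^{(1−ε)/(1+ε)} ≤ 1 so the right side is nonnegative). Then for all k, γ_k ≤ ( c k (1−ε)/(1+ε) + ρ^{−(1−ε)/(1+ε)} )^{−(1+ε)/(1−ε)}. In particular γ_k → 0 with a polynomial rate. -/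
/-- polynomial decay of `γ_k` under `γ_{k+1} ≤ γ_k − c γ_k^{2/(1+ε)}`,
`γ_0 ≤ ρ`, `ε ∈ (0,1)`:
`γ_k ≤ (c k (1−ε)/(1+ε) + ρ^{−(1−ε)/(1+ε)})^{−(1+ε)/(1−ε)}`, and `γ_k → 0`. -/
theorem stmt_7 (γ : ℕ → ℝ) (c ρ ε : ℝ)
    (hε : ε ∈ Set.Ioo (0 : ℝ) 1) (hc : 0 < c) (hρ : 0 < ρ)
    (hnn : ∀ k, 0 ≤ γ k) (h0 : γ 0 ≤ ρ)
    (hrec : ∀ k, γ (k + 1) ≤ γ k - c * γ k ^ (2 / (1 + ε)))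
    (hsmall : ∀ k, c * γ k ^ ((1 - ε) / (1 + ε)) ≤ 1) :
    (∀ k : ℕ, γ k ≤
        (c * k * ((1 - ε) / (1 + ε)) + ρ ^ (-((1 - ε) / (1 + ε))))
          ^ (-((1 + ε) / (1 - ε)))) ∧
      Filter.Tendsto γ Filter.atTop (nhds 0) := by
  obtain ⟨hε0, hε1⟩ := hε
  set β : ℝ := (1 - ε) / (1 + ε) with hβdef
  have h1ε : (0:ℝ) < 1 + ε := by linarith
  have hβ0 : 0 < β := div_pos (by linarith) h1ε
  have hβ1 : β < 1 := by rw [hβdef, div_lt_one h1ε]; linarith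
  set A : ℕ → ℝ := fun k => c * k * β + ρ ^ (-β) with hAdef
  have hA0 : ∀ k : ℕ, 0 < A k := by
    intro k
    have h1 : (0:ℝ) < ρ ^ (-β) := Real.rpow_pos_of_pos hρ _
    have h2 : (0:ℝ) ≤ c * k * β := by positivity
    simp only [hAdef]; linarith
  have hAsucc : ∀ k : ℕ, A (k + 1) = A k + c * β := by
    intro k; simp only [hAdef]; push_cast; ring
  have hexp : 2 / (1 + ε) = 1 + β := by rw [hβdef]; field_simp; norm_num
  -- key induction : γ k ^ β ≤ (A k)⁻¹
  have key : ∀ k : ℕ, γ k ^ β ≤ (A k)⁻¹ := by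
    intro k
    induction k with
    | zero =>
      have hA : A 0 = ρ ^ (-β) := by simp [hAdef]
      rw [hA, Real.rpow_neg hρ.le, inv_inv]
      exact Real.rpow_le_rpow (hnn 0) h0 hβ0.le
    | succ k ih =>
      rcases eq_or_lt_of_le (hnn k) with hz | hpos
      · -- γ k = 0, then γ (k+1) = 0
        have h2 : (0:ℝ) ^ (2 / (1 + ε)) = 0 := by
          rw [Real.zero_rpow]; positivity
        have hle : γ (k + 1) ≤ 0 := by
          have := hrec k; rw [← hz, h2] at this; linarith
        have hγ1 : γ (k + 1) = 0 := le_antisymm hle (hnn _)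
        rw [hγ1, Real.zero_rpow (ne_of_gt hβ0)]
        exact (inv_pos.mpr (hA0 _)).le
      rcases eq_or_lt_of_le (hnn (k + 1)) with hz1 | hpos1
      · rw [← hz1, Real.zero_rpow (ne_of_gt hβ0)]
        exact (inv_pos.mpr (hA0 _)).le
      -- both positive
      set t : ℝ := γ k ^ β with htdef
      have ht : 0 < t := Real.rpow_pos_of_pos hpos _
      set s : ℝ := c * t with hsdef
      have hs0 : 0 < s := mul_pos hc ht
      have hs1 : s ≤ 1 := hsmall k
      have hfac : γ (k + 1) ≤ γ k * (1 - s) := by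
        have h := hrec k
        rw [hexp, Real.rpow_add hpos, Real.rpow_one] at h
        calc γ (k + 1) ≤ γ k - c * (γ k * t) := h
          _ = γ k * (1 - s) := by rw [hsdef]; ring
      have hslt1 : s < 1 := by
        by_contra h
        push_neg at h
        have : γ k * (1 - s) ≤ 0 := by nlinarith
        linarith
      have hβs : 0 < 1 - β * s := by nlinarith
      -- Bernoulli: (1 - s)^β ≤ 1 - β*s
      have hbern : (1 - s) ^ β ≤ 1 - β * s := by
        have := rpow_one_add_le_one_add_mul_self
          (s := -s) (by linarith) hβ0.le hβ1.le
        have h2 : (1 + -s) = 1 - s := by ring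
        rw [h2] at this
        linarith
      have hstep : γ (k + 1) ^ β ≤ t * (1 - β * s) := by
        calc γ (k + 1) ^ β ≤ (γ k * (1 - s)) ^ β :=
              Real.rpow_le_rpow (hnn _) hfac hβ0.le
          _ = t * (1 - s) ^ β := Real.mul_rpow hpos.le (by linarith)
          _ ≤ t * (1 - β * s) := mul_le_mul_of_nonneg_left hbern ht.le
      -- invert
      have hu : 0 < t * (1 - β * s) := mul_pos ht hβs
      have h2 : A k ≤ t⁻¹ := (le_inv_comm₀ ht (hA0 k)).mp ih
      have hinv1 : (1 - β * s) * (1 - β * s)⁻¹ = 1 := mul_inv_cancel₀ (ne_of_gt hβs)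
      have hv : 0 < (1 - β * s)⁻¹ := inv_pos.mpr hβs
      have h1 : 1 + β * s ≤ (1 - β * s)⁻¹ := by
        nlinarith [mul_nonneg (mul_nonneg hβ0.le hs0.le) hv.le,
          mul_nonneg (mul_nonneg hβ0.le hs0.le)
            (mul_nonneg (mul_nonneg hβ0.le hs0.le) hv.le)]
      have h3 : t⁻¹ * s = c := by
        rw [hsdef]; field_simp
      have hinv : A k + c * β ≤ (t * (1 - β * s))⁻¹ := by
        rw [mul_inv]
        have h4 : t⁻¹ * (1 + β * s) ≤ t⁻¹ * (1 - β * s)⁻¹ :=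
          mul_le_mul_of_nonneg_left h1 (inv_pos.mpr ht).le
        have h5 : t⁻¹ * (1 + β * s) = t⁻¹ + c * β := by
          rw [hsdef]; field_simp
        linarith
      rw [hAsucc]
      calc γ (k + 1) ^ β ≤ t * (1 - β * s) := hstep
        _ ≤ (A k + c * β)⁻¹ := by
            have hApos : 0 < A k + c * β := by nlinarith [hA0 k]
            exact (le_inv_comm₀ hu hApos).mpr hinv
  -- convert to the stated bound
  have hq : (0:ℝ) < (1 + ε) / (1 - ε) := div_pos h1ε (by linarith)
  have hqβ : -((1 + ε) / (1 - ε)) = -β⁻¹ := by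
    rw [hβdef, inv_div]
  have bound : ∀ k : ℕ, γ k ≤ A k ^ (-((1 + ε) / (1 - ε))) := by
    intro k
    rw [hqβ]
    have h1 : γ k = (γ k ^ β) ^ β⁻¹ :=
      (Real.rpow_rpow_inv (hnn k) (ne_of_gt hβ0)).symm
    rw [h1]
    calc (γ k ^ β) ^ β⁻¹ ≤ ((A k)⁻¹) ^ β⁻¹ :=
          Real.rpow_le_rpow (Real.rpow_nonneg (hnn k) β) (key k)
            (inv_nonneg.mpr hβ0.le)
      _ = A k ^ (-β⁻¹) := by
          rw [Real.inv_rpow (hA0 k).le, Real.rpow_neg (hA0 k).le]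
  constructor
  · intro k; exact bound k
  · apply squeeze_zero hnn bound
    have hAtend : Filter.Tendsto (fun k : ℕ => A k) Filter.atTop Filter.atTop := by
      simp only [hAdef]
      apply Filter.tendsto_atTop_add_const_right
      have h1 : Filter.Tendsto (fun k : ℕ => (c * β) * (k:ℝ))
          Filter.atTop Filter.atTop :=
        (tendsto_natCast_atTop_atTop).const_mul_atTop (by positivity)
      exact h1.congr (fun k => by ring)
    exact (tendsto_rpow_neg_atTop hq).comp hAtend
end

section
/- Let X, Y be Hilbert spaces, F : B → Y with ‖F'(x)‖ ≤ L̂ on B, and Hölder stability (1/√2)‖x − x̃‖ ≤ C_F‖F(x) − F(x̃)‖^{(1+ε)/2} on B, ε ∈ (0,1]. Suppose x₀, x† ∈ B with F(x†) = y, (1/2)‖x₀ − x†‖² ≤ ρ where ρ = (1/(2L̂²)) (q/(2 L C_F²))^{2/ε}, and the Taylor remainder bound ‖y − F(x₀) − F'(x₀)(x† − x₀)‖ ≤ (L/2)‖x₀ − x†‖² holds. Then ‖y − F(x₀) − F'(x₀)(x† − x₀)‖ ≤ (q/2)‖F(x₀) − y‖, i.e., condition (2.4) holds with ω = 2, guaranteeing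 unique solvability of the Morozov equation for α₀. -/
/-- under the bound `‖F'‖ ≤ L̂`, the mean value inequality, Hölder stability,
`ρ = (1/(2L̂²))(q/(2LC_F²))^{2/ε}`, `(1/2)‖x₀ − x†‖² ≤ ρ` and the Taylor remainder bound,
one gets `‖y − F(x₀) − F'(x₀)(x† − x₀)‖ ≤ (q/2)‖F(x₀) − y‖`. -/
theorem stmt_9 {X Y : Type*}
    [NormedAddCommGroup X] [InnerProductSpace ℝ X] [CompleteSpace X]
    [NormedAddCommGroup Y] [InnerProductSpace ℝ Y] [CompleteSpace Y]
    (B : Set X) (F : X → Y) (F' : X → X →L[ℝ] Y) (y : Y)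
    (L Lhat C_F ε q ρ : ℝ)
    (hL : 0 < L) (hLhat : 0 < Lhat) (hC : 0 < C_F)
    (hε : ε ∈ Set.Ioc (0 : ℝ) 1) (hq : q ∈ Set.Ioo (0 : ℝ) 1)
    (hbound : ∀ x ∈ B, ‖F' x‖ ≤ Lhat)
    (hmv : ∀ x ∈ B, ∀ x' ∈ B, ‖F x - F x'‖ ≤ Lhat * ‖x - x'‖)
    (hholder : ∀ x ∈ B, ∀ x' ∈ B,
      1 / Real.sqrt 2 * ‖x - x'‖ ≤ C_F * ‖F x - F x'‖ ^ ((1 + ε) / 2))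
    (x₀ xdag : X) (hx₀ : x₀ ∈ B) (hxdag : xdag ∈ B) (hy : F xdag = y)
    (hρ : ρ = 1 / (2 * Lhat ^ 2) * (q / (2 * L * C_F ^ 2)) ^ (2 / ε))
    (hinit : 1 / 2 * ‖x₀ - xdag‖ ^ 2 ≤ ρ)
    (htaylor : ‖y - F x₀ - F' x₀ (xdag - x₀)‖ ≤ L / 2 * ‖x₀ - xdag‖ ^ 2) :
    ‖y - F x₀ - F' x₀ (xdag - x₀)‖ ≤ q / 2 * ‖F x₀ - y‖ := by
  obtain ⟨hε0, hε1⟩ := hε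
  obtain ⟨hq0, hq1⟩ := hq
  set d := ‖F x₀ - y‖ with hddef
  set s := ‖x₀ - xdag‖ with hsdef
  have hd0 : 0 ≤ d := norm_nonneg _
  have hs0 : 0 ≤ s := norm_nonneg _
  have hc0 : (0:ℝ) < q / (2 * L * C_F ^ 2) := by positivity
  set c := q / (2 * L * C_F ^ 2) with hcdef
  have hhol : 1 / Real.sqrt 2 * s ≤ C_F * d ^ ((1 + ε) / 2) := by
    have h := hholder x₀ hx₀ xdag hxdag
    rwa [hy] at h
  rcases eq_or_lt_of_le hd0 with hdz | hdz
  · -- degenerate case d = 0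
    have hz : (0:ℝ) ^ ((1 + ε) / 2) = 0 := Real.zero_rpow (by positivity)
    have hse : 1 / Real.sqrt 2 * s ≤ 0 := by
      rw [← hdz] at hhol
      simpa [hz] using hhol
    have hsqrt2 : (0:ℝ) < 1 / Real.sqrt 2 := by positivity
    have hs0' : s = 0 := le_antisymm (by nlinarith) hs0
    calc ‖y - F x₀ - F' x₀ (xdag - x₀)‖ ≤ L / 2 * s ^ 2 := htaylor
      _ = 0 := by rw [hs0']; ring
      _ ≤ q / 2 * d := by positivity
  · -- main case d > 0
    have ha0 : 0 ≤ c ^ (1 / ε) := Real.rpow_nonneg hc0.le _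
    -- s ≤ c^(1/ε) / Lhat
    have hc2 : c ^ (2 / ε) = (c ^ (1 / ε)) ^ (2:ℕ) := by
      rw [← Real.rpow_natCast (c ^ (1 / ε)) 2, ← Real.rpow_mul hc0.le]
      norm_num
      ring_nf
    have hs2 : s ^ 2 ≤ (c ^ (1 / ε) / Lhat) ^ 2 := by
      rw [hρ, hc2] at hinit
      have e1 : 1 / (2 * Lhat ^ 2) * (c ^ (1 / ε)) ^ 2
          = (c ^ (1 / ε) / Lhat) ^ 2 / 2 := by
        field_simp
      rw [e1] at hinit
      linarith
    have hsle : s ≤ c ^ (1 / ε) / Lhat := by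
      have h1 := Real.sqrt_le_sqrt hs2
      rwa [Real.sqrt_sq hs0, Real.sqrt_sq (by positivity)] at h1
    -- d ≤ c^(1/ε)
    have hdle : d ≤ c ^ (1 / ε) := by
      have h := hmv x₀ hx₀ xdag hxdag
      rw [hy] at h
      calc d ≤ Lhat * s := h
        _ ≤ Lhat * (c ^ (1 / ε) / Lhat) := mul_le_mul_of_nonneg_left hsle hLhat.le
        _ = c ^ (1 / ε) := by field_simp
    -- d^ε ≤ c
    have hdec : d ^ ε ≤ c := by
      have h := Real.rpow_le_rpow hd0 hdle hε0.le
      rwa [← Real.rpow_mul hc0.le, one_div_mul_cancel hε0.ne', Real.rpow_one] at h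
    -- square the Hölder estimate
    have h0 : 0 ≤ 1 / Real.sqrt 2 * s := by positivity
    have hsq := pow_le_pow_left₀ h0 hhol 2
    have hL1 : (1 / Real.sqrt 2 * s) ^ 2 = s ^ 2 / 2 := by
      have h2 : Real.sqrt 2 ^ 2 = 2 := Real.sq_sqrt (by norm_num)
      field_simp
      rw [h2]; ring
    have hR1 : (C_F * d ^ ((1 + ε) / 2)) ^ 2 = C_F ^ 2 * d ^ (1 + ε) := by
      rw [mul_pow, ← Real.rpow_natCast (d ^ ((1 + ε) / 2)) 2, ← Real.rpow_mul hd0]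
      norm_num
    have hsplit : d ^ (1 + ε) = d * d ^ ε := by
      rw [Real.rpow_add hdz, Real.rpow_one]
    rw [hL1, hR1, hsplit] at hsq
    -- conclude
    have hde0 : 0 ≤ d ^ ε := Real.rpow_nonneg hd0 _
    have h1 : s ^ 2 ≤ 2 * C_F ^ 2 * (d * d ^ ε) := by linarith
    have h2 : d * d ^ ε ≤ d * c := mul_le_mul_of_nonneg_left hdec hd0
    have h4 : 2 * C_F ^ 2 * (d * d ^ ε) ≤ 2 * C_F ^ 2 * (d * c) :=
      mul_le_mul_of_nonneg_left h2 (by positivity)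
    have h6 : 2 * C_F ^ 2 * (d * c) = q / L * d := by
      rw [hcdef]; field_simp
    have h5 : s ^ 2 ≤ q / L * d := by linarith
    have h7 := mul_le_mul_of_nonneg_left h5 (show (0:ℝ) ≤ L / 2 by positivity)
    have h8 : L / 2 * (q / L * d) = q / 2 * d := by field_simp
    rw [h8] at h7
    linarith [htaylor]
end

section
/- Let X, Y be Banach spaces, F : S → Y Lipschitz with constant L̃ on a set S ⊆ X, Q : Y → Y bounded linear, C̃ > 0, and suppose the stability estimate ‖x − x̃‖ ≤ 2C̃‖Q(F(x)) − Q(F(x̃))‖ holds for all x, x̃ ∈ S. Let K ⊆ S be compact, x† ∈ K, ρ > 0, and let {x^(j) : j ∈ J} ⊆ K be a finite set such that K ⊆ ⋃_{j∈J} B(x^(j), ρ/(2 L̃ C̃ ‖Q‖)). Then: (i) there exists j ∈ J with ‖Q(F(x^(j))) − Q(F(x†))‖ ≤ ρ/(2C̃); and (ii) for any j satisfying (i) with strict inequality ‖Q(F(x^(j))) − Q(F(x†))‖ < ρ/(2C̃), one has ‖x^(j) − x†‖ < ρ. -/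
/-- Lemma 2 of Alberti–Santacesaria: given Lipschitz `F`, a continuous
linear `Q`, the stability estimate `‖x − x̃‖ ≤ 2C̃‖Q(F x) − Q(F x̃)‖` on `S`, a compact
`K ⊆ S` containing `x†`, and a finite lattice covering `K` by balls of radius
`ρ/(2 L̃ C̃ ‖Q‖)`, (i) some lattice point `j` satisfies
`‖Q(F j) − Q(F x†)‖ ≤ ρ/(2C̃)`, and (ii) any lattice point satisfying this strictly
satisfies `‖j − x†‖ < ρ`. -/
theorem stmt_14 {X Y : Type*}
    [NormedAddCommGroup X] [NormedSpace ℝ X] [CompleteSpace X]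
    [NormedAddCommGroup Y] [NormedSpace ℝ Y] [CompleteSpace Y]
    (S : Set X) (F : X → Y) (Q : Y →L[ℝ] Y)
    (Lt Ct ρ : ℝ) (hLt : 0 < Lt) (hCt : 0 < Ct) (hρ : 0 < ρ) (hQ : 0 < ‖Q‖)
    (hLip : ∀ x ∈ S, ∀ x' ∈ S, ‖F x - F x'‖ ≤ Lt * ‖x - x'‖)
    (hstab : ∀ x ∈ S, ∀ x' ∈ S, ‖x - x'‖ ≤ 2 * Ct * ‖Q (F x) - Q (F x')‖)
    (K : Set X) (hKS : K ⊆ S) (hK : IsCompact K)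
    (xdag : X) (hxdag : xdag ∈ K)
    (J : Finset X) (hJK : ↑J ⊆ K)
    (hcover : K ⊆ ⋃ j ∈ J, Metric.ball j (ρ / (2 * Lt * Ct * ‖Q‖))) :
    (∃ j ∈ J, ‖Q (F j) - Q (F xdag)‖ ≤ ρ / (2 * Ct)) ∧
      ∀ j ∈ J, ‖Q (F j) - Q (F xdag)‖ < ρ / (2 * Ct) → ‖j - xdag‖ < ρ := by
  constructor
  · have h := hcover hxdag
    simp only [Set.mem_iUnion, Metric.mem_ball] at h
    obtain ⟨j, hjJ, hd⟩ := h
    refine ⟨j, hjJ, ?_⟩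
    have hjS : j ∈ S := hKS (hJK hjJ)
    have hxS : xdag ∈ S := hKS hxdag
    calc ‖Q (F j) - Q (F xdag)‖ = ‖Q (F j - F xdag)‖ := by rw [map_sub]
      _ ≤ ‖Q‖ * ‖F j - F xdag‖ := Q.le_opNorm _
      _ ≤ ‖Q‖ * (Lt * ‖j - xdag‖) := by
          exact mul_le_mul_of_nonneg_left (hLip j hjS xdag hxS) (norm_nonneg _)
      _ ≤ ‖Q‖ * (Lt * (ρ / (2 * Lt * Ct * ‖Q‖))) := by
          have : ‖j - xdag‖ ≤ ρ / (2 * Lt * Ct * ‖Q‖) := by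
            rw [← dist_eq_norm]; rw [dist_comm]; exact le_of_lt hd
          gcongr
      _ = ρ / (2 * Ct) := by field_simp
  · intro j hj hlt
    have hjS : j ∈ S := hKS (hJK hj)
    have hxS : xdag ∈ S := hKS hxdag
    calc ‖j - xdag‖ ≤ 2 * Ct * ‖Q (F j) - Q (F xdag)‖ := hstab j hjS xdag hxS
      _ < 2 * Ct * (ρ / (2 * Ct)) := by gcongr
      _ = ρ := by field_simp
end
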